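/- The function u(x) = sinh_{v,w}(x) satisfies the initial value problem (|u'|^{v-2} u')' - ((v-1)w/v)·|u|^{w-2}·u = 0 with u(0)=0, u'(0)=1, on a neighborhood of 0, for v > 1 and w > 1. -/

import Mathlib

/-! Differentiating `arsinh_{v,w} (sinh_{v,w} x) = x` gives `cosh_{v,w} = (1 + |sinh_{v,w}|^w)^(1/v)`,
so `|u'|^(v-2) u' = (1 + |u|^w)^((v-1)/v)`, and the chain rule turns the derivative of this
into `((v-1)w/v) |u|^(w-2) u`, the extra factor `(1 + |u|^w)^(-1/v) u'` being `1`. -/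

open MeasureTheory Set

/-- `s` is the generalized hyperbolic sine `sinh_{v,w}` on the open set `D`
(the inverse of `arsinh_{v,w}(y) = ∫₀^y (1+|t|^w)^(-1/v) dt`) and
`c = sinh_{v,w}' = cosh_{v,w}`. -/
def IsGenSinh (v w : ℝ) (D : Set ℝ) (s c : ℝ → ℝ) : Prop :=
  IsOpen D ∧ (∀ x ∈ D, (∫ t in (0:ℝ)..(s x), (1 + |t| ^ w) ^ (-1 / v)) = x) ∧
    (∀ x ∈ D, HasDerivAt s (c x) x)

open Filter Topology

section LeftInverse

variable {f s : ℝ → ℝ}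

theorem strictMono_integral_of_pos (hf : Continuous f) (hpos : ∀ t, 0 < f t) (a : ℝ) :
    StrictMono fun y => ∫ t in a..y, f t :=
  strictMono_of_hasDerivAt_pos (fun y => (hf.integral_hasStrictDerivAt a y).hasDerivAt) hpos

theorem eq_zero_of_integral_eq_zero (hf : Continuous f) (hpos : ∀ t, 0 < f t) {y : ℝ}
    (hy : ∫ t in (0 : ℝ)..y, f t = 0) : y = 0 :=
  (strictMono_integral_of_pos hf hpos 0).injective (hy.trans intervalIntegral.integral_same.symm)

theorem HasDerivAt.eq_inv_of_integral_comp_eqOn {D : Set ℝ} {c x : ℝ} (hs : HasDerivAt s c x)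
    (hf : Continuous f) (hfx : f (s x) ≠ 0) (hD : D ∈ 𝓝 x)
    (hinv : ∀ y ∈ D, ∫ t in (0 : ℝ)..s y, f t = y) : c = (f (s x))⁻¹ :=
  hs.unique <| (hf.integral_hasStrictDerivAt 0 (s x)).hasDerivAt.of_local_left_inverse
    hs.continuousAt hfx (eventually_of_mem hD hinv)

end LeftInverse

section OneAddAbsRpow

variable {w : ℝ}

theorem continuous_one_add_abs_rpow_rpow (hw : 0 ≤ w) (p : ℝ) :
    Continuous fun t : ℝ => (1 + |t| ^ w) ^ p :=
  (continuous_const.add (continuous_abs.rpow_const fun _ => Or.inr hw)).rpow_const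
    fun t => Or.inl (by positivity : (0 : ℝ) < 1 + |t| ^ w).ne'

theorem HasDerivAt.one_add_abs_rpow_rpow {s : ℝ → ℝ} {c x : ℝ} (hs : HasDerivAt s c x)
    (hw : 1 < w) (p : ℝ) :
    HasDerivAt (fun t => (1 + |s t| ^ w) ^ p)
      (w * |s x| ^ (w - 2) * s x * c * p * (1 + |s x| ^ w) ^ (p - 1)) x :=
  (((hasDerivAt_abs_rpow (s x) hw).comp x hs).const_add 1).rpow_const
    (Or.inl (by positivity : (0 : ℝ) < 1 + |s x| ^ w).ne')

end OneAddAbsRpow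

namespace IsGenSinh

variable {v w : ℝ} {D : Set ℝ} {s c : ℝ → ℝ} {x : ℝ}

theorem map_zero (hw : 0 ≤ w) (h : IsGenSinh v w D s c) (h0 : 0 ∈ D) : s 0 = 0 :=
  eq_zero_of_integral_eq_zero (continuous_one_add_abs_rpow_rpow hw _) (fun _ => by positivity)
    (h.2.1 0 h0)

theorem cosh_eq (hw : 0 ≤ w) (h : IsGenSinh v w D s c) (hx : x ∈ D) :
    c x = (1 + |s x| ^ w) ^ (1 / v) := by
  rw [(h.2.2 x hx).eq_inv_of_integral_comp_eqOn (continuous_one_add_abs_rpow_rpow hw _)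
    (by positivity) (h.1.mem_nhds hx) h.2.1, neg_div, Real.rpow_neg (by positivity), inv_inv]

theorem cosh_zero (hw : 0 < w) (h : IsGenSinh v w D s c) (h0 : 0 ∈ D) : c 0 = 1 := by
  rw [h.cosh_eq hw.le h0, h.map_zero hw.le h0, abs_zero, Real.zero_rpow hw.ne', add_zero,
    Real.one_rpow]

theorem abs_rpow_mul_cosh_eq (hw : 0 ≤ w) (h : IsGenSinh v w D s c) (hx : x ∈ D) :
    |c x| ^ (v - 2) * c x = (1 + |s x| ^ w) ^ ((v - 1) / v) := by
  have hc : 0 < c x := h.cosh_eq hw hx ▸ by positivity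
  rw [abs_of_pos hc, ← Real.rpow_add_one hc.ne', h.cosh_eq hw hx, ← Real.rpow_mul (by positivity)]
  ring_nf

theorem hasDerivAt_abs_rpow_mul_cosh (hv : v ≠ 0) (hw : 1 < w) (h : IsGenSinh v w D s c)
    (hx : x ∈ D) :
    HasDerivAt (fun t => |c t| ^ (v - 2) * c t) ((v - 1) * w / v * (|s x| ^ (w - 2) * s x)) x := by
  have hw0 : 0 ≤ w := by linarith
  have hflux : (fun t => (1 + |s t| ^ w) ^ ((v - 1) / v)) =ᶠ[𝓝 x] fun t => |c t| ^ (v - 2) * c t :=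
    eventually_of_mem (h.1.mem_nhds hx) fun t ht => (h.abs_rpow_mul_cosh_eq hw0 ht).symm
  have hunit : (1 + |s x| ^ w) ^ ((v - 1) / v - 1) * c x = 1 := by
    rw [h.cosh_eq hw0 hx, ← Real.rpow_add (by positivity),
      show (v - 1) / v - 1 + 1 / v = 0 by field_simp; ring, Real.rpow_zero]
  refine (((h.2.2 x hx).one_add_abs_rpow_rpow hw _).congr_of_eventuallyEq hflux.symm).congr_deriv ?_
  linear_combination (v - 1) * w / v * (|s x| ^ (w - 2) * s x) * hunit

end IsGenSinh

/-- For `v > 1` and `w > 1`, `u = sinh_{v,w}` solves the initial value problem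
`(|u'|^(v-2) u')' - ((v-1)w/v)·|u|^(w-2)·u = 0`, `u(0) = 0`, `u'(0) = 1`,
on a neighborhood of `0`. -/
theorem stmt6 (v w : ℝ) (hv : 1 < v) (hw : 1 < w)
    (D : Set ℝ) (s c : ℝ → ℝ) (h : IsGenSinh v w D s c) (h0 : 0 ∈ D) :
    s 0 = 0 ∧ c 0 = 1 ∧ ∃ ε > (0:ℝ), ∀ x : ℝ, |x| < ε →
      deriv (fun t => |c t| ^ (v - 2) * c t) x
        - (v - 1) * w / v * (|s x| ^ (w - 2) * s x) = 0 := by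
  obtain ⟨ε, hε, hball⟩ := Metric.isOpen_iff.mp h.1 0 h0
  refine ⟨h.map_zero (by linarith) h0, h.cosh_zero (by linarith) h0, ε, hε, fun x hx => ?_⟩
  have hxD : x ∈ D := hball (by simpa using hx)
  rw [(h.hasDerivAt_abs_rpow_mul_cosh (by linarith) hw hxD).deriv, sub_self]
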